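/- arXiv:2205.06708 — 3 statements merged into one kernel-verified Lean document; each statement's English description precedes it below -/
import Mathlib

section
/- Suppose the joint distribution P of a triple (Y, A, B) of discrete random variables is exchangeable in its last two coordinates, i.e., P(Y=y, A=a, B=b) = P(Y=y, A=b, B=a) for all y, a, b, where A and B take values in the message set M. Then for any stochastic decoder D: Y → Δ(M), 2·E[∑_{m̂ ≠ A} D(m̂|Y)] ≥ P(A ≠ B). Consequently the average decoding error probability E[D({m̂ : m̂ ≠ A}|Y)] is at least P(A ≠ B)/2. -/
/-!
Write `err a = ∑_{m̂ ≠ a} D(m̂|y) = 1 - D(a|y)`. If `a ≠ b`, the decoder cannot put mass more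
than `1` on `{a, b}`, so `err a + err b ≥ 1 = [a ≠ b]`; if `a = b` the right side is still
nonnegative. Averaging over `P` and using the exchangeability of `(A, B)` turns
`E[err A + err B]` into `2 E[err A]`.
-/

open Finset

section Exchangeable

variable {ι R : Type*} [Fintype ι]

theorem sum_sum_mul_add_of_symm [Semiring R] (P : ι → ι → R) (hP : ∀ a b, P a b = P b a)
    (g : ι → R) : ∑ a, ∑ b, P a b * (g a + g b) = 2 * ∑ a, ∑ b, P a b * g a := by
  have hswap : ∑ a, ∑ b, P a b * g b = ∑ a, ∑ b, P a b * g a := by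
    rw [sum_comm]
    simp only [hP]
  simp only [mul_add, sum_add_distrib, hswap, two_mul]

end Exchangeable

section ErrorProbability

variable {M : Type*} [Fintype M] [DecidableEq M] {f : M → ℝ}

theorem sum_filter_ne_eq_one_sub (hf : ∑ m, f m = 1) (a : M) :
    ∑ m ∈ univ.filter (fun m => m ≠ a), f m = 1 - f a := by
  rw [filter_ne', sum_erase_eq_sub (mem_univ a), hf]

theorem add_le_one_of_ne (hf0 : ∀ m, 0 ≤ f m) (hf : ∑ m, f m = 1) {a b : M} (hab : a ≠ b) :
    f a + f b ≤ 1 := by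
  rw [← sum_pair hab, ← hf]
  exact sum_le_univ_sum_of_nonneg hf0

theorem ite_ne_le_sum_filter_ne_add (hf0 : ∀ m, 0 ≤ f m) (hf : ∑ m, f m = 1) (a b : M) :
    (if a ≠ b then (1 : ℝ) else 0) ≤
      ∑ m ∈ univ.filter (fun m => m ≠ a), f m + ∑ m ∈ univ.filter (fun m => m ≠ b), f m := by
  split_ifs with hab
  · rw [sum_filter_ne_eq_one_sub hf, sum_filter_ne_eq_one_sub hf]
    linarith [add_le_one_of_ne hf0 hf hab]
  · exact add_nonneg (sum_nonneg fun m _ => hf0 m) (sum_nonneg fun m _ => hf0 m)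

end ErrorProbability

theorem stmt_4_general {Y M : Type*} [Fintype Y] [Fintype M] [DecidableEq M]
    (P : Y → M → M → ℝ) (hP0 : ∀ y a b, 0 ≤ P y a b)
    (hsymm : ∀ y a b, P y a b = P y b a)
    (D : Y → M → ℝ) (hD0 : ∀ y m, 0 ≤ D y m) (hDsum : ∀ y, ∑ m, D y m = 1) :
    (∑ y, ∑ a, ∑ b, if a ≠ b then P y a b else 0)
      ≤ 2 * ∑ y, ∑ a, ∑ b, P y a b *
          ∑ mhat ∈ Finset.univ.filter (fun mhat => mhat ≠ a), D y mhat ∧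
    (∑ y, ∑ a, ∑ b, if a ≠ b then P y a b else 0) / 2
      ≤ ∑ y, ∑ a, ∑ b, P y a b *
          ∑ mhat ∈ Finset.univ.filter (fun mhat => mhat ≠ a), D y mhat := by
  have key : (∑ y, ∑ a, ∑ b, if a ≠ b then P y a b else 0)
      ≤ 2 * ∑ y, ∑ a, ∑ b, P y a b *
          ∑ mhat ∈ Finset.univ.filter (fun mhat => mhat ≠ a), D y mhat := by
    rw [mul_sum]
    gcongr with y
    rw [← sum_sum_mul_add_of_symm (P y) (hsymm y)]
    gcongr with a _ b _
    calc (if a ≠ b then P y a b else 0) = P y a b * (if a ≠ b then 1 else 0) := by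
          rw [mul_ite, mul_one, mul_zero]
      _ ≤ _ := mul_le_mul_of_nonneg_left
          (ite_ne_le_sum_filter_ne_add (hD0 y) (hDsum y) a b) (hP0 y a b)
  exact ⟨key, by linarith⟩

/-- If the joint distribution of `(Y, A, B)` is exchangeable in its last two coordinates,
then for any stochastic decoder `D`, twice the average error probability
`E[∑_{m̂ ≠ A} D(m̂|Y)]` is at least `P(A ≠ B)`; equivalently, the average decoding error
probability is at least `P(A ≠ B)/2`. -/
theorem stmt_4 {Y M : Type*} [Fintype Y] [Fintype M] [DecidableEq M]
    (P : Y → M → M → ℝ) (hP0 : ∀ y a b, 0 ≤ P y a b)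
    (hPsum : ∑ y, ∑ a, ∑ b, P y a b = 1)
    (hsymm : ∀ y a b, P y a b = P y b a)
    (D : Y → M → ℝ) (hD0 : ∀ y m, 0 ≤ D y m) (hDsum : ∀ y, ∑ m, D y m = 1) :
    (∑ y, ∑ a, ∑ b, if a ≠ b then P y a b else 0)
      ≤ 2 * ∑ y, ∑ a, ∑ b, P y a b *
          ∑ mhat ∈ Finset.univ.filter (fun mhat => mhat ≠ a), D y mhat ∧
    (∑ y, ∑ a, ∑ b, if a ≠ b then P y a b else 0) / 2
      ≤ ∑ y, ∑ a, ∑ b, P y a b *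
          ∑ mhat ∈ Finset.univ.filter (fun mhat => mhat ≠ a), D y mhat :=
  stmt_4_general P hP0 hsymm D hD0 hDsum
end

section
/- Let P ∈ Δ(X²) be a joint distribution and P_X, P_{X'} its marginals, and suppose ‖P − Q⊗Q‖_∞ ≤ δ for some Q ∈ Δ(X), and suppose additionally P(x,x') = 0 whenever Q(x) = 0 or Q(x') = 0. Let W: X×S → Y be a channel with W(y|x,s) ∈ [0,1] and V*, V ∈ Δ(S|X²) be such that for all (x,x',y): P(x,x')·∑_s V*(s|x,x')W(y|x,s) = P(x',x)·∑_s V(s|x',x)W(y|x',s). Then for all (x, x', y) with Q(x) ≠ 0 and Q(x') ≠ 0, |∑_s V*(s|x,x')W(y|x,s) − ∑_s V(s|x',x)W(y|x',s)| ≤ 2δ/(Q(x)·Q(x')). -/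
open Finset

theorem abs_sum_mul_le_one {ι : Type*} {t : Finset ι} {w f : ι → ℝ}
    (hw0 : ∀ i, 0 ≤ w i) (hw : ∑ i ∈ t, w i = 1) (hf : ∀ i, |f i| ≤ 1) :
    |∑ i ∈ t, w i * f i| ≤ 1 :=
  calc |∑ i ∈ t, w i * f i| ≤ ∑ i ∈ t, |w i * f i| := abs_sum_le_sum_abs _ _
    _ ≤ ∑ i ∈ t, w i := sum_le_sum fun i _ => by
        rw [abs_mul, abs_of_nonneg (hw0 i)]
        exact mul_le_of_le_one_right (hw0 i) (hf i)
    _ = 1 := hw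

theorem abs_sub_le_of_mul_eq_mul {p p' q a b δ : ℝ} (hq : 0 < q)
    (ha : |a| ≤ 1) (hb : |b| ≤ 1) (hp : |p - q| ≤ δ) (hp' : |p' - q| ≤ δ)
    (h : p * a = p' * b) :
    |a - b| ≤ 2 * δ / q := by
  have hsplit : (a - b) * q = (q - p) * a + (p' - q) * b := by linear_combination h
  rw [le_div_iff₀ hq]
  calc |a - b| * q = |(q - p) * a + (p' - q) * b| := by
        rw [← hsplit, abs_mul, abs_of_pos hq]
    _ ≤ |q - p| * |a| + |p' - q| * |b| := by
        simpa only [abs_mul] using abs_add_le ((q - p) * a) ((p' - q) * b)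
    _ ≤ δ + δ := by
        rw [abs_sub_comm q p]
        exact add_le_add ((mul_le_of_le_one_right (abs_nonneg _) ha).trans hp)
          ((mul_le_of_le_one_right (abs_nonneg _) hb).trans hp')
    _ = 2 * δ := by ring

theorem stmt_9_general {X S Y : Type*} [Fintype S]
    (δ : ℝ)
    (P : X → X → ℝ)
    (Q : X → ℝ) (hQ0 : ∀ x, 0 ≤ Q x)
    (hclose : ∀ x x', |P x x' - Q x * Q x'| ≤ δ)
    (W : X → S → Y → ℝ) (hW0 : ∀ x s y, 0 ≤ W x s y) (hW1 : ∀ x s y, W x s y ≤ 1)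
    (Vstar V : X → X → S → ℝ)
    (hVstar0 : ∀ x x' s, 0 ≤ Vstar x x' s) (hVstarsum : ∀ x x', ∑ s, Vstar x x' s = 1)
    (hV0 : ∀ x x' s, 0 ≤ V x x' s) (hVsum : ∀ x x', ∑ s, V x x' s = 1)
    (hsym : ∀ x x' y,
      P x x' * ∑ s, Vstar x x' s * W x s y = P x' x * ∑ s, V x' x s * W x' s y) :
    ∀ x x' y, Q x ≠ 0 → Q x' ≠ 0 →
      |(∑ s, Vstar x x' s * W x s y) - ∑ s, V x' x s * W x' s y|
        ≤ 2 * δ / (Q x * Q x') := by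
  intro x x' y hx hx'
  have hW : ∀ x s, |W x s y| ≤ 1 := fun x s =>
    abs_le.mpr ⟨by linarith [hW0 x s y], hW1 x s y⟩
  have hclose' : |P x' x - Q x * Q x'| ≤ δ := mul_comm (Q x) (Q x') ▸ hclose x' x
  exact abs_sub_le_of_mul_eq_mul (mul_pos ((hQ0 x).lt_of_ne' hx) ((hQ0 x').lt_of_ne' hx'))
    (abs_sum_mul_le_one (hVstar0 x x') (hVstarsum x x') (hW x))
    (abs_sum_mul_le_one (hV0 x' x) (hVsum x' x) (hW x')) (hclose x x') hclose' (hsym x x' y)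

/-- Approximate symmetrization from exact symmetrization under a near-product joint type.
If `‖P − Q⊗Q‖∞ ≤ δ`, `P(x,x') = 0` whenever `Q(x) = 0` or `Q(x') = 0`, and
`P(x,x')·∑_s V*(s|x,x')W(y|x,s) = P(x',x)·∑_s V(s|x',x)W(y|x',s)` for all `(x,x',y)`,
then wherever `Q(x) ≠ 0 ≠ Q(x')`,
`|∑_s V*(s|x,x')W(y|x,s) − ∑_s V(s|x',x)W(y|x',s)| ≤ 2δ/(Q(x)·Q(x'))`. -/
theorem stmt_9 {X S Y : Type*} [Fintype X] [Fintype S] [Fintype Y]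
    (δ : ℝ) (hδ : 0 ≤ δ)
    (P : X → X → ℝ) (hP0 : ∀ x x', 0 ≤ P x x')
    (Q : X → ℝ) (hQ0 : ∀ x, 0 ≤ Q x) (hQsum : ∑ x, Q x = 1)
    (hclose : ∀ x x', |P x x' - Q x * Q x'| ≤ δ)
    (hsupp : ∀ x x', Q x = 0 ∨ Q x' = 0 → P x x' = 0)
    (W : X → S → Y → ℝ) (hW0 : ∀ x s y, 0 ≤ W x s y) (hW1 : ∀ x s y, W x s y ≤ 1)
    (Vstar V : X → X → S → ℝ)
    (hVstar0 : ∀ x x' s, 0 ≤ Vstar x x' s) (hVstarsum : ∀ x x', ∑ s, Vstar x x' s = 1)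
    (hV0 : ∀ x x' s, 0 ≤ V x x' s) (hVsum : ∀ x x', ∑ s, V x x' s = 1)
    (hsym : ∀ x x' y,
      P x x' * ∑ s, Vstar x x' s * W x s y = P x' x * ∑ s, V x' x s * W x' s y) :
    ∀ x x' y, Q x ≠ 0 → Q x' ≠ 0 →
      |(∑ s, Vstar x x' s * W x s y) - ∑ s, V x' x s * W x' s y|
        ≤ 2 * δ / (Q x * Q x') :=
  stmt_9_general δ P Q hQ0 hclose W hW0 hW1 Vstar V hVstar0 hVstarsum hV0 hVsum hsym
end

section
/- Let A, B be random variables with values in a finite set M such that conditioned on a third random variable Y they are i.i.d., and suppose on an event E₁ = {Y ∈ A₁} the conditional entropy satisfies H(A | Y = y) ≥ h for all y ∈ A₁. Then P(A ≠ B | E₁) ≥ (h − 1 − log 2)/log|M|. -/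
/-!
Gibbs' inequality `H(Q) ≤ ∑ Q m · (-log₂ r m)`, valid for any positive weights `r` of total
mass at most one, applied to `r = 1/2` at a point `m₀` and `r = 1/(2|M|)` elsewhere, gives the
Fano-type bound `H(Q) ≤ 1 + (1 - Q m₀) log₂ |M|`. Taking `m₀` most likely, the collision
probability `∑ Q m ^ 2` is at most `Q m₀`, so two independent samples of `Q` differ with
probability at least `(H(Q) - 1) / log₂ |M|`. Averaging over `y ∈ A₁` gives the theorem.
-/

open Finset

/-- Binary Shannon entropy of a distribution on a finite type. -/
noncomputable def shannonEntropy {V : Type*} [Fintype V] (P : V → ℝ) : ℝ :=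
  ∑ v, -(P v * Real.logb 2 (P v))

open Real

lemma negMulLog_le_mul_neg_log_add_sub {p r : ℝ} (hp : 0 ≤ p) (hr : 0 < r) :
    negMulLog p ≤ p * -log r + (r - p) := by
  have hdiv := mul_le_mul_of_nonneg_left (negMulLog_le_one_sub_self (div_nonneg hp hr.le)) hr.le
  rcases hp.eq_or_lt with rfl | hp
  · simpa using hr.le
  rw [negMulLog, log_div hp.ne' hr.ne'] at hdiv
  field_simp at hdiv
  rw [negMulLog]
  linarith

lemma sum_negMulLog_le_sum_mul_neg_log {ι : Type*} {s : Finset ι} {p r : ι → ℝ}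
    (hp : ∀ i ∈ s, 0 ≤ p i) (hr : ∀ i ∈ s, 0 < r i) (hrp : ∑ i ∈ s, r i ≤ ∑ i ∈ s, p i) :
    ∑ i ∈ s, negMulLog (p i) ≤ ∑ i ∈ s, p i * -log (r i) :=
  calc ∑ i ∈ s, negMulLog (p i) ≤ ∑ i ∈ s, (p i * -log (r i) + (r i - p i)) :=
        sum_le_sum fun i hi => negMulLog_le_mul_neg_log_add_sub (hp i hi) (hr i hi)
    _ ≤ ∑ i ∈ s, p i * -log (r i) := by
        rw [sum_add_distrib, sum_sub_distrib]
        linarith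

lemma shannonEntropy_eq_sum_negMulLog_div {V : Type*} [Fintype V] (P : V → ℝ) :
    shannonEntropy P = (∑ v, negMulLog (P v)) / log 2 := by
  simp only [shannonEntropy, sum_div, logb, negMulLog, neg_mul, neg_div, mul_div_assoc]

lemma shannonEntropy_le_sum_mul_neg_logb {V : Type*} [Fintype V] {P r : V → ℝ}
    (hP : ∀ v, 0 ≤ P v) (hr : ∀ v, 0 < r v) (hrP : ∑ v, r v ≤ ∑ v, P v) :
    shannonEntropy P ≤ ∑ v, P v * -logb 2 (r v) := by
  simp only [shannonEntropy_eq_sum_negMulLog_div, logb, ← neg_div, ← mul_div_assoc, ← sum_div]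
  gcongr ?_ / _
  exact sum_negMulLog_le_sum_mul_neg_log (fun v _ => hP v) (fun v _ => hr v) hrP

lemma shannonEntropy_le_one_add_one_sub_mul_logb_card {M : Type*} [Fintype M] [DecidableEq M]
    {Q : M → ℝ} (hQ : ∀ m, 0 ≤ Q m) (hQsum : ∑ m, Q m = 1) (m₀ : M) :
    shannonEntropy Q ≤ 1 + (1 - Q m₀) * logb 2 (Fintype.card M) := by
  set n : ℝ := (Fintype.card M : ℝ) with hn_def
  have hn : 0 < n := by have := Fintype.card_pos_iff.mpr ⟨m₀⟩; positivity
  set r : M → ℝ := fun m => if m = m₀ then 2⁻¹ else (2 * n)⁻¹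
  have hr : ∀ m, 0 < r m := fun m => by dsimp only [r]; split_ifs <;> positivity
  have hr_le : ∀ m, r m ≤ (if m = m₀ then 2⁻¹ else 0) + (2 * n)⁻¹ := fun m => by
    dsimp only [r]; split_ifs <;> simp [hn.le]
  have hr_sum : ∑ m, r m ≤ ∑ m, Q m := calc
    ∑ m, r m ≤ ∑ m, ((if m = m₀ then 2⁻¹ else 0) + (2 * n)⁻¹) := sum_le_sum fun m _ => hr_le m
    _ = ∑ m, Q m := by
      rw [sum_add_distrib, sum_ite_eq', if_pos (mem_univ _), sum_const, card_univ, nsmul_eq_mul,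
        hQsum, ← hn_def]
      field_simp
      ring
  have hcost : ∀ m, -logb 2 (r m) = 1 + if m = m₀ then 0 else logb 2 n := fun m => by
    dsimp only [r]
    split_ifs
    · simp
    · rw [logb_inv, logb_mul two_ne_zero hn.ne', logb_self_eq_one one_lt_two]; ring
  calc shannonEntropy Q ≤ ∑ m, Q m * -logb 2 (r m) :=
        shannonEntropy_le_sum_mul_neg_logb hQ hr hr_sum
    _ = 1 + (1 - Q m₀) * logb 2 n := by
      simp only [hcost, mul_add, mul_one, sum_add_distrib, hQsum, mul_ite, mul_zero]
      rw [sum_ite, sum_const_zero, zero_add, filter_ne', sum_erase_eq_sub (mem_univ _), ← sum_mul,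
        hQsum]
      ring

lemma sum_sq_le_of_forall_le {M : Type*} [Fintype M] {Q : M → ℝ} (hQ : ∀ m, 0 ≤ Q m)
    (hQsum : ∑ m, Q m = 1) {m₀ : M} (hmax : ∀ m, Q m ≤ Q m₀) : ∑ m, Q m ^ 2 ≤ Q m₀ :=
  calc ∑ m, Q m ^ 2 ≤ ∑ m, Q m * Q m₀ :=
        sum_le_sum fun m _ => by rw [sq]; exact mul_le_mul_of_nonneg_left (hmax m) (hQ m)
    _ = Q m₀ := by rw [← sum_mul, hQsum, one_mul]

lemma shannonEntropy_le_one_add_one_sub_sum_sq_mul_logb_card {M : Type*} [Fintype M]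
    [DecidableEq M] {Q : M → ℝ} (hQ : ∀ m, 0 ≤ Q m) (hQsum : ∑ m, Q m = 1) :
    shannonEntropy Q ≤ 1 + (1 - ∑ m, Q m ^ 2) * logb 2 (Fintype.card M) := by
  have : Nonempty M := by
    by_contra hM
    simp [not_nonempty_iff.mp hM] at hQsum
  obtain ⟨m₀, -, hmax⟩ := exists_max_image univ Q univ_nonempty
  have hlog : 0 ≤ logb 2 (Fintype.card M) :=
    logb_nonneg one_lt_two (by exact_mod_cast Fintype.card_pos)
  calc shannonEntropy Q ≤ 1 + (1 - Q m₀) * logb 2 (Fintype.card M) :=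
        shannonEntropy_le_one_add_one_sub_mul_logb_card hQ hQsum m₀
    _ ≤ 1 + (1 - ∑ m, Q m ^ 2) * logb 2 (Fintype.card M) := by
        gcongr
        exact sum_sq_le_of_forall_le hQ hQsum fun m => hmax m (mem_univ m)

lemma sum_sum_ite_ne_mul_eq_one_sub_sum_sq {M : Type*} [Fintype M] [DecidableEq M]
    {Q : M → ℝ} (hQsum : ∑ m, Q m = 1) :
    ∑ a, ∑ b, (if a ≠ b then Q a * Q b else 0) = 1 - ∑ m, Q m ^ 2 := by
  have hsplit : ∀ a b,
      (if a ≠ b then Q a * Q b else 0) = Q a * Q b - if a = b then Q a * Q b else 0 :=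
    fun a b => by split_ifs <;> simp_all
  simp only [hsplit, sum_sub_distrib, sum_ite_eq, mem_univ, if_true, ← sum_mul_sum, hQsum, sq]
  ring

lemma le_div_sum_of_forall_le {ι : Type*} {s : Finset ι} {w f : ι → ℝ} {c : ℝ}
    (hw : ∀ i ∈ s, 0 ≤ w i) (hs : 0 < ∑ i ∈ s, w i) (hf : ∀ i ∈ s, c ≤ f i) :
    c ≤ (∑ i ∈ s, w i * f i) / ∑ i ∈ s, w i := by
  have := inf_le_centerMass hw hs (f := f)
  simp only [centerMass, smul_eq_mul] at this
  rw [div_eq_inv_mul]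
  exact (le_inf' _ _ hf).trans this

theorem stmt_14_general {Y M : Type*} [Fintype M] [DecidableEq M]
    (hM : 2 ≤ Fintype.card M)
    (pY : Y → ℝ) (hpY : ∀ y, 0 ≤ pY y)
    (Q : Y → M → ℝ) (hQ0 : ∀ y m, 0 ≤ Q y m) (hQsum : ∀ y, ∑ m, Q y m = 1)
    (A₁ : Finset Y) (hA₁pos : 0 < ∑ y ∈ A₁, pY y)
    (h : ℝ) (hent : ∀ y ∈ A₁, h ≤ shannonEntropy (Q y)) :
    (h - 1 - Real.logb 2 2) / Real.logb 2 (Fintype.card M)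
      ≤ (∑ y ∈ A₁, pY y * ∑ a, ∑ b, if a ≠ b then Q y a * Q y b else 0)
          / ∑ y ∈ A₁, pY y := by
  have hlog : 0 < logb 2 (Fintype.card M) := logb_pos one_lt_two (by exact_mod_cast hM)
  refine le_div_sum_of_forall_le (fun y _ => hpY y) hA₁pos fun y hy => ?_
  rw [sum_sum_ite_ne_mul_eq_one_sub_sum_sq (hQsum y), logb_self_eq_one one_lt_two,
    div_le_iff₀ hlog]
  linarith [hent y hy,
    shannonEntropy_le_one_add_one_sub_sum_sq_mul_logb_card (hQ0 y) (hQsum y)]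

/-- Conditional no-collision bound: if `A, B` are conditionally i.i.d. given `Y` (with
conditional law `Q y`) and `H(A | Y = y) ≥ h` for every `y` in an event `A₁` of positive
probability, then `P(A ≠ B | Y ∈ A₁) ≥ (h − 1 − log 2)/log|M|`. -/
theorem stmt_14 {Y M : Type*} [Fintype Y] [Fintype M] [DecidableEq M]
    (hM : 2 ≤ Fintype.card M)
    (pY : Y → ℝ) (hpY : ∀ y, 0 ≤ pY y) (hpYsum : ∑ y, pY y = 1)
    (Q : Y → M → ℝ) (hQ0 : ∀ y m, 0 ≤ Q y m) (hQsum : ∀ y, ∑ m, Q y m = 1)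
    (A₁ : Finset Y) (hA₁pos : 0 < ∑ y ∈ A₁, pY y)
    (h : ℝ) (hent : ∀ y ∈ A₁, h ≤ shannonEntropy (Q y)) :
    (h - 1 - Real.logb 2 2) / Real.logb 2 (Fintype.card M)
      ≤ (∑ y ∈ A₁, pY y * ∑ a, ∑ b, if a ≠ b then Q y a * Q y b else 0)
          / ∑ y ∈ A₁, pY y :=
  stmt_14_general hM pY hpY Q hQ0 hQsum A₁ hA₁pos h hent
end
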